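/- arXiv:1502.01865 — 11 statements merged into one kernel-verified Lean document; each statement's English description precedes it below -/
import Mathlib

section
/- Let R be an integral domain and n a natural number. Let f and g be multivariate polynomials in the variables x_1,...,x_n over R, let t : Fin n → ℕ be such that for every i the degree of f in the variable x_i is at most t i and the degree of g in x_i is at most t i, and let S i ⊆ R (for i = 1,...,n) be finite sets with |S i| ≥ t i + 1. If f(a) = g(a) for every point a : Fin n → R with a i ∈ S i for all i, then f = g as polynomials. -/
open MvPolynomial

private lemma aux_zero {R : Type*} [CommRing R] [IsDomain R] : ∀ (n : ℕ)
    (p : MvPolynomial (Fin n) R) (t : Fin n → ℕ),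
    (∀ i, p.degreeOf i ≤ t i) → ∀ (S : Fin n → Finset R), (∀ i, t i < (S i).card) →
    (∀ a : Fin n → R, (∀ i, a i ∈ S i) → eval a p = 0) → p = 0 := by
  intro n
  induction n with
  | zero =>
    intro p t _ S _ h
    obtain ⟨r, rfl⟩ := MvPolynomial.C_surjective (Fin 0) p
    have := h Fin.elim0 (fun i => i.elim0)
    simpa using this
  | succ n ih =>
    intro p t ht S hS h
    have key : finSuccEquiv R n p = 0 := by
      rw [Polynomial.ext_iff]
      intro i
      rw [Polynomial.coeff_zero]
      apply ih _ (fun j => t j.succ)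
        (fun j => (degreeOf_coeff_finSuccEquiv p j i).trans (ht j.succ))
        (fun j => S j.succ) (fun j => hS j.succ)
      intro a ha
      have hq : Polynomial.map (eval a) (finSuccEquiv R n p) = 0 := by
        apply Polynomial.eq_zero_of_natDegree_lt_card_of_eval_eq_zero' _ (S 0)
        · intro y hy
          rw [← eval_eq_eval_mv_eval']
          apply h
          intro j
          refine Fin.cases ?_ ?_ j
          · simpa using hy
          · intro j; simpa using ha j
        · calc (Polynomial.map (eval a) (finSuccEquiv R n p)).natDegree
              ≤ (finSuccEquiv R n p).natDegree := Polynomial.natDegree_map_le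
            _ = p.degreeOf 0 := natDegree_finSuccEquiv p
            _ ≤ t 0 := ht 0
            _ < (S 0).card := hS 0
      have := congrArg (fun q => Polynomial.coeff q i) hq
      simpa using this
    exact (map_eq_zero_iff _ (finSuccEquiv R n).injective).mp key

theorem stmt_0 {R : Type*} [CommRing R] [IsDomain R] {n : ℕ}
    (f g : MvPolynomial (Fin n) R) (t : Fin n → ℕ)
    (hf : ∀ i, f.degreeOf i ≤ t i) (hg : ∀ i, g.degreeOf i ≤ t i)
    (S : Fin n → Finset R) (hS : ∀ i, t i + 1 ≤ (S i).card)
    (h : ∀ a : Fin n → R, (∀ i, a i ∈ S i) → eval a f = eval a g) :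
    f = g := by
  have : f - g = 0 := by
    apply aux_zero n (f - g) t
    · intro i
      exact (MvPolynomial.degreeOf_sub_le i f g).trans (max_le (hf i) (hg i))
    · exact fun i => hS i
    · intro a ha
      simp [h a ha]
  exact sub_eq_zero.mp this
end

section
/- Let f and F be multivariate polynomials in n variables with coefficients in ℕ. If F(a) = f(a) for every a : Fin n → ℕ with a i ≤ 1 for all i, then for every subset S of Fin n the sum of the coefficients of F over all exponent vectors whose support is exactly S equals the corresponding sum of coefficients of f; in particular, Sup(F) = Sup(f). -/
open MvPolynomial

private lemma eval_indicator {n : ℕ} (p : MvPolynomial (Fin n) ℕ) (S : Finset (Fin n)) :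
    eval (fun i => if i ∈ S then 1 else 0) p =
      ∑ T ∈ S.powerset, ∑ d ∈ p.support.filter (fun d => d.support = T), p.coeff d := by
  rw [eval_eq']
  have h1 : ∀ d : Fin n →₀ ℕ,
      (∏ i, (if i ∈ S then (1:ℕ) else 0) ^ d i) = if d.support ⊆ S then 1 else 0 := by
    intro d
    by_cases hd : d.support ⊆ S
    · rw [if_pos hd]
      apply Finset.prod_eq_one
      intro i _
      by_cases hi : i ∈ S
      · simp [hi]
      · have : d i = 0 := by
          by_contra h0
          exact hi (hd (Finsupp.mem_support_iff.mpr h0))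
        simp [this]
    · rw [if_neg hd]
      obtain ⟨i, hi, his⟩ := Finset.not_subset.mp hd
      apply Finset.prod_eq_zero (Finset.mem_univ i)
      have : d i ≠ 0 := Finsupp.mem_support_iff.mp hi
      simp [his, this]
  simp_rw [h1, mul_ite, mul_one, mul_zero]
  rw [Finset.sum_ite, Finset.sum_const_zero, add_zero]
  have h2 := Finset.sum_fiberwise_of_maps_to (s := p.support.filter (fun d => d.support ⊆ S))
    (t := S.powerset) (g := fun d => d.support) (f := fun d => p.coeff d)
    (fun d hd => Finset.mem_powerset.mpr (Finset.mem_filter.mp hd).2)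
  rw [← h2]
  apply Finset.sum_congr rfl
  intro T hT
  rw [Finset.filter_filter]
  apply Finset.sum_congr _ (fun _ _ => rfl)
  apply Finset.filter_congr
  intro d _
  constructor
  · intro hd; exact hd.2
  · intro hd; exact ⟨hd ▸ Finset.mem_powerset.mp hT, hd⟩

theorem stmt_2 {n : ℕ} (f F : MvPolynomial (Fin n) ℕ)
    (h : ∀ a : Fin n → ℕ, (∀ i, a i ≤ 1) → eval a F = eval a f) :
    (∀ S : Finset (Fin n),
        ∑ d ∈ F.support.filter (fun d => d.support = S), F.coeff d =
          ∑ d ∈ f.support.filter (fun d => d.support = S), f.coeff d) ∧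
      F.support.image (fun d => d.support) = f.support.image (fun d => d.support) := by
  have key : ∀ S : Finset (Fin n),
      ∑ T ∈ S.powerset, ∑ d ∈ F.support.filter (fun d => d.support = T), F.coeff d =
      ∑ T ∈ S.powerset, ∑ d ∈ f.support.filter (fun d => d.support = T), f.coeff d := by
    intro S
    rw [← eval_indicator, ← eval_indicator]
    exact h _ (fun i => by by_cases hi : i ∈ S <;> simp [hi])
  have main : ∀ S : Finset (Fin n),
      ∑ d ∈ F.support.filter (fun d => d.support = S), F.coeff d =
        ∑ d ∈ f.support.filter (fun d => d.support = S), f.coeff d := by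
    intro S
    induction S using Finset.strongInduction with
    | _ S ih =>
      have hS : S ∈ S.powerset := Finset.mem_powerset.mpr le_rfl
      have := key S
      rw [← Finset.add_sum_erase _ _ hS, ← Finset.add_sum_erase _ _ hS] at this
      have heq : ∑ T ∈ S.powerset.erase S,
          ∑ d ∈ F.support.filter (fun d => d.support = T), F.coeff d =
          ∑ T ∈ S.powerset.erase S,
          ∑ d ∈ f.support.filter (fun d => d.support = T), f.coeff d := by
        apply Finset.sum_congr rfl
        intro T hT
        have := Finset.mem_erase.mp hT
        exact ih T (lt_of_le_of_ne (Finset.mem_powerset.mp this.2) this.1)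
      omega
  refine ⟨main, ?_⟩
  ext S
  simp only [Finset.mem_image]
  have hne : ∀ p : MvPolynomial (Fin n) ℕ,
      (∃ d ∈ p.support, d.support = S) ↔
      (∑ d ∈ p.support.filter (fun d => d.support = S), p.coeff d) ≠ 0 := by
    intro p
    rw [Ne, Finset.sum_eq_zero_iff]
    push_neg
    constructor
    · rintro ⟨d, hd, hds⟩
      exact ⟨d, Finset.mem_filter.mpr ⟨hd, hds⟩, mem_support_iff.mp hd⟩
    · rintro ⟨d, hd, -⟩
      have := Finset.mem_filter.mp hd
      exact ⟨d, this.1, this.2⟩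
  rw [hne, hne, main S]
end

section
/- Let f and h be multivariate polynomials in n variables with coefficients in ℕ. Then the following are equivalent: (i) for every a : Fin n → ℕ with a i ≤ 1 for all i, f(a) = 0 if and only if h(a) = 0; (ii) Min(f) = Min(h). -/
open MvPolynomial

/-- The support family `Sup(f)`: the sets of variables of monomials of `f`
with nonzero coefficient. -/
def supFamily {n : ℕ} (f : MvPolynomial (Fin n) ℕ) : Finset (Finset (Fin n)) :=
  f.support.image fun d => d.support

/-- `Min(f)`: the members of `Sup(f)` that are minimal with respect to inclusion. -/
def minFamily {n : ℕ} (f : MvPolynomial (Fin n) ℕ) : Finset (Finset (Fin n)) :=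
  (supFamily f).filter fun s => ∀ t ∈ supFamily f, t ⊆ s → t = s

/-!
Over `ℕ` a sum vanishes only if every term does, so `f(a) = 0` exactly when every monomial of `f`
contains a variable at which `a` vanishes, i.e. when the set of nonzero coordinates of `a` lies
outside the upward closure of `Sup(f)`. Evaluating at 0/1-points, condition (i) therefore says
that `Sup(f)` and `Sup(h)` have the same upward closure. A family has the same minimal elements
as its upward closure, and its upward closure is generated by those minimal elements, so this
is equivalent to `Min(f) = Min(h)`.
-/

theorem minimal_mem_upperClosure_iff {α : Type*} [PartialOrder α] {s : Set α} {x : α} :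
    Minimal (· ∈ upperClosure s) x ↔ Minimal (· ∈ s) x := by
  simp only [mem_upperClosure]
  constructor
  · rintro ⟨⟨a, has, hax⟩, hmin⟩
    have hxa : x ≤ a := hmin ⟨a, has, le_rfl⟩ hax
    exact ⟨le_antisymm hax hxa ▸ has, fun b hb hbx => hmin ⟨b, hb, le_rfl⟩ hbx⟩
  · rintro ⟨hx, hmin⟩
    exact ⟨⟨x, hx, le_rfl⟩,
      fun y ⟨a, has, hay⟩ hyx => (hmin has (hay.trans hyx)).trans hay⟩

theorem MvPolynomial.eval_eq_zero_iff_forall_exists_eq_zero {σ R : Type*} [CommSemiring R]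
    [PartialOrder R] [CanonicallyOrderedAdd R] [NoZeroDivisors R] [Nontrivial R]
    (f : MvPolynomial σ R) (a : σ → R) :
    eval a f = 0 ↔ ∀ d ∈ f.support, ∃ i ∈ d.support, a i = 0 := by
  rw [eval_eq, Finset.sum_eq_zero_iff]
  refine forall₂_congr fun d hd => ?_
  rw [mul_eq_zero, or_iff_right (mem_support_iff.mp hd), Finset.prod_eq_zero_iff]
  exact exists_congr fun i => and_congr_right fun hi =>
    pow_eq_zero_iff (Finsupp.mem_support_iff.mp hi)

section Families

variable {n : ℕ} (f : MvPolynomial (Fin n) ℕ)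

theorem eval_eq_zero_iff_notMem_upperClosure_supFamily (a : Fin n → ℕ) :
    eval a f = 0 ↔
      Finset.univ.filter (fun i => a i ≠ 0) ∉
        upperClosure (supFamily f : Set (Finset (Fin n))) := by
  simp only [eval_eq_zero_iff_forall_exists_eq_zero, mem_upperClosure, supFamily,
    Finset.coe_image, Set.mem_image, Finset.mem_coe, not_exists, not_and, forall_exists_index,
    and_imp, forall_apply_eq_imp_iff₂]
  refine forall₂_congr fun d _ => ?_
  simp [Finset.not_subset]

theorem mem_minFamily_iff {s : Finset (Fin n)} :
    s ∈ minFamily f ↔ Minimal (· ∈ supFamily f) s := by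
  simp only [minFamily, Finset.mem_filter, Minimal]
  refine and_congr_right fun _ => forall₂_congr fun t _ => ?_
  exact ⟨fun h hts => (h hts).ge, fun h hts => Finset.Subset.antisymm hts (h hts)⟩

theorem upperClosure_minFamily :
    upperClosure (minFamily f : Set (Finset (Fin n))) = upperClosure (supFamily f) := by
  ext s
  simp only [SetLike.mem_coe, mem_upperClosure, mem_minFamily_iff]
  constructor
  · rintro ⟨t, ht, hts⟩
    exact ⟨t, ht.prop, hts⟩
  · rintro ⟨t, ht, hts⟩
    obtain ⟨u, hut, hu⟩ := exists_minimal_le_of_wellFoundedLT (· ∈ supFamily f) t ht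
    exact ⟨u, hu, hut.trans hts⟩

theorem minFamily_eq_iff_upperClosure_eq (h : MvPolynomial (Fin n) ℕ) :
    minFamily f = minFamily h ↔
      upperClosure (supFamily f : Set (Finset (Fin n))) = upperClosure (supFamily h) := by
  refine ⟨fun hfh => by rw [← upperClosure_minFamily, hfh, upperClosure_minFamily],
    fun hfh => ?_⟩
  ext s
  rw [mem_minFamily_iff, mem_minFamily_iff]
  exact minimal_mem_upperClosure_iff.symm.trans (hfh ▸ minimal_mem_upperClosure_iff)

end Families

theorem stmt_3 {n : ℕ} (f h : MvPolynomial (Fin n) ℕ) :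
    (∀ a : Fin n → ℕ, (∀ i, a i ≤ 1) → (eval a f = 0 ↔ eval a h = 0)) ↔
      minFamily f = minFamily h := by
  simp only [eval_eq_zero_iff_notMem_upperClosure_supFamily, minFamily_eq_iff_upperClosure_eq,
    not_iff_not]
  refine ⟨fun H => ?_, fun H a _ => by rw [H]⟩
  ext s
  simpa using H (fun i => if i ∈ s then 1 else 0) fun i => by split_ifs <;> simp
end

section
/- Let A be a finite family of subsets of Fin n, each of cardinality exactly m, and let r ≤ m. Then |A| · C(m, r) ≤ deg_r(A) · C(n, r), where C(·,·) denotes the binomial coefficient. -/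
/-- The `r`-th degree of a finite family `A` of subsets of a finite type `V`:
the maximum, over all `r`-element subsets `b` of `V`, of the number of sets
`a ∈ A` containing `b` (equal to `0` if there is no `r`-element subset). -/
def famDeg {V : Type*} [Fintype V] [DecidableEq V]
    (A : Finset (Finset V)) (r : ℕ) : ℕ :=
  ((Finset.univ : Finset V).powersetCard r).sup fun b =>
    (A.filter fun a => b ⊆ a).card

theorem stmt_4 {n : ℕ} (A : Finset (Finset (Fin n))) (m r : ℕ)
    (hA : ∀ a ∈ A, a.card = m) (hr : r ≤ m) :
    A.card * Nat.choose m r ≤ famDeg A r * Nat.choose n r := by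
  classical
  set B := (Finset.univ : Finset (Fin n)).powersetCard r with hB
  have key : A.card * Nat.choose m r = ∑ b ∈ B, (A.filter fun a => b ⊆ a).card := by
    have : ∑ b ∈ B, (A.filter fun a => b ⊆ a).card
        = ∑ b ∈ B, ∑ a ∈ A, (if b ⊆ a then 1 else 0) := by
      refine Finset.sum_congr rfl fun b _ => ?_
      rw [Finset.card_filter]
    rw [this, Finset.sum_comm]
    have : ∀ a ∈ A, (∑ b ∈ B, (if b ⊆ a then 1 else 0)) = Nat.choose m r := by
      intro a ha
      rw [← Finset.card_filter]
      have hfe : B.filter (fun b => b ⊆ a) = a.powersetCard r := by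
        ext b
        simp only [hB, Finset.mem_filter, Finset.mem_powersetCard]
        constructor
        · rintro ⟨⟨_, hc⟩, hba⟩; exact ⟨hba, hc⟩
        · rintro ⟨hba, hc⟩; exact ⟨⟨Finset.subset_univ _, hc⟩, hba⟩
      rw [hfe, Finset.card_powersetCard, hA a ha]
    rw [Finset.sum_congr rfl this, Finset.sum_const, smul_eq_mul]
  rw [key]
  have hcard : B.card = Nat.choose n r := by
    rw [hB, Finset.card_powersetCard, Finset.card_univ, Fintype.card_fin]
  calc ∑ b ∈ B, (A.filter fun a => b ⊆ a).card
      ≤ ∑ _b ∈ B, famDeg A r :=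
        Finset.sum_le_sum fun b hb => Finset.le_sup (f := fun b => (A.filter fun a => b ⊆ a).card) hb
    _ = famDeg A r * Nat.choose n r := by
        rw [Finset.sum_const, smul_eq_mul, hcard, mul_comm]
end

section
/- Let B and C be finite families of finite subsets of a finite type V such that every set in B is disjoint from every set in C, and let A = B ∨ C. Then for every b ∈ B and every c ∈ C one has |A| ≤ deg_{|c|}(A) · deg_{|b|}(A). -/
/-- The join `B ∨ C` of two families: all pairwise unions. -/
def famJoin {V : Type*} [DecidableEq V]
    (B C : Finset (Finset V)) : Finset (Finset V) :=
  (B ×ˢ C).image fun p => p.1 ∪ p.2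

/-!
Every `a ∈ B ∨ C` is some `x ∪ y`, so `|B ∨ C| ≤ |B| |C|`. Fixing `c ∈ C`, the map `x ↦ x ∪ c`
sends `B` injectively (as `x = (x ∪ c) \ c` by disjointness) into the members of `B ∨ C`
containing `c`, so `|B| ≤ deg_{|c|}(B ∨ C)`; symmetrically `|C| ≤ deg_{|b|}(B ∨ C)`.
-/

open Finset

section

variable {V : Type*} [DecidableEq V]

theorem union_mem_famJoin {B C : Finset (Finset V)} {x y : Finset V} (hx : x ∈ B) (hy : y ∈ C) :
    x ∪ y ∈ famJoin B C :=
  mem_image_of_mem _ (mk_mem_product hx hy)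

theorem famJoin_comm (B C : Finset (Finset V)) : famJoin B C = famJoin C B := by
  ext a
  simp only [famJoin, mem_image, mem_product, Prod.exists]
  constructor <;> rintro ⟨x, y, ⟨hx, hy⟩, rfl⟩ <;> exact ⟨y, x, ⟨hy, hx⟩, union_comm _ _⟩

theorem card_famJoin_le_mul (B C : Finset (Finset V)) :
    (famJoin B C).card ≤ B.card * C.card :=
  (card_image_le).trans (card_product B C).le

theorem card_filter_superset_le_famDeg [Fintype V] (A : Finset (Finset V)) (s : Finset V) :
    (A.filter fun a => s ⊆ a).card ≤ famDeg A s.card :=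
  le_sup (f := fun t => (A.filter fun a => t ⊆ a).card) (mem_powersetCard_univ.mpr rfl)

theorem card_le_famDeg_famJoin [Fintype V] {B C : Finset (Finset V)} {c : Finset V}
    (hc : c ∈ C) (hB : ∀ x ∈ B, Disjoint x c) :
    B.card ≤ famDeg (famJoin B C) c.card := by
  refine le_trans ?_ (card_filter_superset_le_famDeg _ c)
  refine card_le_card_of_injOn (· ∪ c) ?_ ?_
  · intro x hx
    exact mem_filter.mpr ⟨union_mem_famJoin hx hc, subset_union_right⟩
  · intro x hx x' hx' h
    rw [← union_sdiff_cancel_right (hB x hx), ← union_sdiff_cancel_right (hB x' hx')]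
    exact congrArg (· \ c) h

end

theorem stmt_5 {V : Type*} [Fintype V] [DecidableEq V]
    (B C : Finset (Finset V))
    (hdisj : ∀ b ∈ B, ∀ c ∈ C, Disjoint b c) :
    ∀ b ∈ B, ∀ c ∈ C,
      (famJoin B C).card ≤ famDeg (famJoin B C) c.card * famDeg (famJoin B C) b.card := by
  intro b hb c hc
  have hB : B.card ≤ famDeg (famJoin B C) c.card :=
    card_le_famDeg_famJoin hc fun x hx => hdisj x hx c hc
  have hC : C.card ≤ famDeg (famJoin B C) b.card := by
    rw [famJoin_comm]
    exact card_le_famDeg_famJoin hb fun y hy => (hdisj b hb y hy).symm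
  exact (card_famJoin_le_mul B C).trans (Nat.mul_le_mul hB hC)
end

section
/- Let m ≥ 2 and let G and H be finite families of finite subsets of a finite type V such that every set in G has cardinality at least m and every set h ∈ H satisfies 3·|h| < m. Let B and C be finite families of finite subsets of V with B ∨ C ⊆ G ∪ H, and suppose there exist b ∈ B and c ∈ C with b ∪ c ∈ G and m < 3·|b| ≤ 2m. Then B ∨ C ⊆ G, and |B ∨ C| ≤ deg_r(G) · deg_{m−r}(G) where r = |b|. -/
theorem stmt_7 {V : Type*} [Fintype V] [DecidableEq V]
    (m : ℕ) (hm : 2 ≤ m) (G H : Finset (Finset V))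
    (hG : ∀ g ∈ G, m ≤ g.card)
    (hH : ∀ h ∈ H, 3 * h.card < m)
    (B C : Finset (Finset V))
    (hsub : famJoin B C ⊆ G ∪ H)
    (b : Finset V) (hb : b ∈ B) (c : Finset V) (hc : c ∈ C)
    (hbc : b ∪ c ∈ G) (hb1 : m < 3 * b.card) (hb2 : 3 * b.card ≤ 2 * m) :
    famJoin B C ⊆ G ∧
      (famJoin B C).card ≤ famDeg G b.card * famDeg G (m - b.card) := by
  classical
  -- Step A: for every c' ∈ C, b ∪ c' ∈ G
  have hA : ∀ c' ∈ C, b ∪ c' ∈ G := by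
    intro c' hc'
    have hmem : b ∪ c' ∈ G ∪ H :=
      hsub (Finset.mem_image.mpr ⟨(b, c'), Finset.mem_product.mpr ⟨hb, hc'⟩, rfl⟩)
    rcases Finset.mem_union.mp hmem with h | h
    · exact h
    · exfalso
      have h1 := hH _ h
      have h2 : b.card ≤ (b ∪ c').card := Finset.card_le_card Finset.subset_union_left
      omega
  -- Step B: every c' ∈ C is fairly large
  have hB : ∀ c' ∈ C, m ≤ 3 * c'.card := by
    intro c' hc'
    have h1 : m ≤ (b ∪ c').card := hG _ (hA c' hc')
    have h2 : (b ∪ c').card ≤ b.card + c'.card := Finset.card_union_le _ _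
    omega
  -- Part 1 : famJoin B C ⊆ G
  have hGsub : famJoin B C ⊆ G := by
    intro a ha
    rcases Finset.mem_union.mp (hsub ha) with h | h
    · exact h
    · exfalso
      obtain ⟨p, hp, hpe⟩ := Finset.mem_image.mp ha
      have hc2 : p.2 ∈ C := (Finset.mem_product.mp hp).2
      have h1 := hB p.2 hc2
      have h2 := hH _ h
      have h3 : p.2.card ≤ a.card := by
        rw [← hpe]; exact Finset.card_le_card Finset.subset_union_right
      omega
  refine ⟨hGsub, ?_⟩
  set Gb := G.filter (fun g => b ⊆ g) with hGbdef
  have hGbcard : Gb.card ≤ famDeg G b.card := by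
    apply Finset.le_sup (f := fun β => (G.filter fun a => β ⊆ a).card)
    exact Finset.mem_powersetCard.mpr ⟨Finset.subset_univ b, rfl⟩
  -- Covering: every element of famJoin B C lies in some class
  have hcover : famJoin B C ⊆
      Gb.biUnion (fun g => G.filter (fun a => g \ b ⊆ a)) := by
    intro a ha
    obtain ⟨p, hp, hpe⟩ := Finset.mem_image.mp ha
    obtain ⟨hp1, hp2⟩ := Finset.mem_product.mp hp
    refine Finset.mem_biUnion.mpr ⟨b ∪ p.2, ?_, ?_⟩
    · exact Finset.mem_filter.mpr ⟨hA _ hp2, Finset.subset_union_left⟩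
    · refine Finset.mem_filter.mpr ⟨hGsub ha, ?_⟩
      intro x hx
      have hx2 : x ∈ p.2 := by
        simp only [Finset.mem_sdiff, Finset.mem_union] at hx
        tauto
      rw [← hpe]
      exact Finset.mem_union_right _ hx2
  -- Each class is small
  have hclass : ∀ g ∈ Gb,
      (G.filter (fun a => g \ b ⊆ a)).card ≤ famDeg G (m - b.card) := by
    intro g hg
    obtain ⟨hgG, hbg⟩ := Finset.mem_filter.mp hg
    have hcard : m - b.card ≤ (g \ b).card := by
      have h1 : (g \ b).card = g.card - b.card := Finset.card_sdiff_of_subset hbg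
      have h2 : m ≤ g.card := hG _ hgG
      omega
    obtain ⟨γ, hγsub, hγcard⟩ := Finset.exists_subset_card_eq hcard
    have hsub2 : (G.filter (fun a => g \ b ⊆ a)) ⊆ (G.filter (fun a => γ ⊆ a)) := by
      intro a ha
      obtain ⟨haG, hsa⟩ := Finset.mem_filter.mp ha
      exact Finset.mem_filter.mpr ⟨haG, hγsub.trans hsa⟩
    calc (G.filter (fun a => g \ b ⊆ a)).card
        ≤ (G.filter (fun a => γ ⊆ a)).card := Finset.card_le_card hsub2
      _ ≤ famDeg G (m - b.card) := by
          apply Finset.le_sup (f := fun β => (G.filter fun a => β ⊆ a).card)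
          exact Finset.mem_powersetCard.mpr ⟨Finset.subset_univ γ, hγcard⟩
  calc (famJoin B C).card
      ≤ (Gb.biUnion (fun g => G.filter (fun a => g \ b ⊆ a))).card :=
        Finset.card_le_card hcover
    _ ≤ ∑ g ∈ Gb, (G.filter (fun a => g \ b ⊆ a)).card := Finset.card_biUnion_le
    _ ≤ Gb.card • famDeg G (m - b.card) := Finset.sum_le_card_nsmul _ _ _ hclass
    _ = Gb.card * famDeg G (m - b.card) := smul_eq_mul ..
    _ ≤ famDeg G b.card * famDeg G (m - b.card) :=
        Nat.mul_le_mul_right _ hGbcard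
end

section
/- Let m ≥ 2 and let G and H be finite families of finite subsets of a finite type V such that every set in G has cardinality at least m and every set h ∈ H satisfies 3·|h| < m. Suppose there are s pairs (B_1, C_1), …, (B_s, C_s) of finite families of finite subsets of V such that B_i ∨ C_i ⊆ G ∪ H for every i, and for every g ∈ G there exist an index i and sets b ∈ B_i, c ∈ C_i with b ∪ c = g and m < 3·|b| ≤ 2m. Then there exists a natural number r with m < 3r ≤ 2m such that |G| ≤ s · deg_r(G) · deg_{m−r}(G). -/
/-!
Split `G` into the classes `Fᵢ` of sets covered by the `i`-th pair and fix `g₀ ∈ Fᵢ` with its part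
`b₀ ∈ Bᵢ`, `r = |b₀|`. For every `g = b ∪ c ∈ Fᵢ` the set `x = b₀ ∪ c` lies in `Bᵢ ∨ Cᵢ ⊆ G ∪ H`
and is too large to be in `H`, so `x ∈ G`, `b₀ ⊆ x` and `x \ b₀ ⊆ c ⊆ g`. There are at most
`deg_r(G)` such `x`, and as `|x \ b₀| ≥ m - r`, each is paired with at most `deg_{m-r}(G)` sets `g`.
Summing over the `s` classes, with `r` chosen to maximise `deg_r(G) · deg_{m-r}(G)`, gives the bound.
-/

open Finset

section

variable {V : Type*}

section Degree

variable [Fintype V] [DecidableEq V]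

lemma card_filter_superset_le_famDeg_s8 (G : Finset (Finset V)) {y : Finset V} {r : ℕ}
    (hr : r ≤ y.card) : #{a ∈ G | y ⊆ a} ≤ famDeg G r := by
  obtain ⟨z, hzy, hz⟩ := exists_subset_card_eq hr
  calc #{a ∈ G | y ⊆ a} ≤ #{a ∈ G | z ⊆ a} :=
        card_le_card (monotone_filter_right _ fun _ _ h => hzy.trans h)
    _ ≤ famDeg G r :=
        le_sup (f := fun b => #{a ∈ G | b ⊆ a}) (mem_powersetCard.2 ⟨subset_univ z, hz⟩)

lemma card_filter_sdiff_subset_le_famDeg (G : Finset (Finset V)) {m : ℕ} {b x : Finset V}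
    (hbx : b ⊆ x) (hx : m ≤ x.card) : #{g ∈ G | x \ b ⊆ g} ≤ famDeg G (m - b.card) :=
  card_filter_superset_le_famDeg_s8 G (by rw [card_sdiff_of_subset hbx]; omega)

lemma card_le_famDeg_mul_famDeg {G F : Finset (Finset V)} {m : ℕ} (hG : ∀ g ∈ G, m ≤ g.card)
    (hFG : F ⊆ G) (b : Finset V) (hF : ∀ g ∈ F, ∃ c ⊆ g, b ∪ c ∈ G) :
    #F ≤ famDeg G b.card * famDeg G (m - b.card) := by
  have hcover : F ⊆ {x ∈ G | b ⊆ x}.biUnion fun x => {g ∈ G | x \ b ⊆ g} := by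
    intro g hg
    obtain ⟨c, hcg, hbc⟩ := hF g hg
    refine mem_biUnion.2 ⟨b ∪ c, mem_filter.2 ⟨hbc, subset_union_left⟩, mem_filter.2 ⟨hFG hg, ?_⟩⟩
    rw [union_sdiff_left]
    exact sdiff_subset.trans hcg
  calc #F ≤ ∑ x ∈ {x ∈ G | b ⊆ x}, #{g ∈ G | x \ b ⊆ g} :=
        (card_le_card hcover).trans card_biUnion_le
    _ ≤ ∑ _x ∈ {x ∈ G | b ⊆ x}, famDeg G (m - b.card) := sum_le_sum fun x hx =>
        card_filter_sdiff_subset_le_famDeg G (mem_filter.1 hx).2 (hG x (mem_filter.1 hx).1)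
    _ = #{x ∈ G | b ⊆ x} * famDeg G (m - b.card) := by rw [sum_const, smul_eq_mul]
    _ ≤ famDeg G b.card * famDeg G (m - b.card) :=
        Nat.mul_le_mul_right _ (card_filter_superset_le_famDeg_s8 G le_rfl)

end Degree

lemma union_mem_of_famJoin_subset [DecidableEq V] {G H B C : Finset (Finset V)} {m : ℕ}
    (hH : ∀ h ∈ H, 3 * h.card < m) (hsub : famJoin B C ⊆ G ∪ H) {b c : Finset V}
    (hb : b ∈ B) (hc : c ∈ C) (hbm : m < 3 * b.card) : b ∪ c ∈ G := by
  have hjoin : b ∪ c ∈ famJoin B C := mem_image.2 ⟨(b, c), mem_product.2 ⟨hb, hc⟩, rfl⟩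
  refine (mem_union.1 (hsub hjoin)).resolve_right fun hbcH => ?_
  have := card_le_card (subset_union_left : b ⊆ b ∪ c)
  have := hH _ hbcH
  omega

end

theorem stmt_8 {V : Type*} [Fintype V] [DecidableEq V]
    (m : ℕ) (hm : 2 ≤ m) (G H : Finset (Finset V))
    (hG : ∀ g ∈ G, m ≤ g.card)
    (hH : ∀ h ∈ H, 3 * h.card < m)
    (s : ℕ) (B C : Fin s → Finset (Finset V))
    (hsub : ∀ i, famJoin (B i) (C i) ⊆ G ∪ H)
    (hcover : ∀ g ∈ G, ∃ i, ∃ b ∈ B i, ∃ c ∈ C i,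
      b ∪ c = g ∧ m < 3 * b.card ∧ 3 * b.card ≤ 2 * m) :
    ∃ r : ℕ, m < 3 * r ∧ 3 * r ≤ 2 * m ∧
      G.card ≤ s * (famDeg G r * famDeg G (m - r)) := by
  classical
  obtain ⟨r, hr, hmax⟩ := exists_max_image (Icc (m / 3 + 1) (2 * m / 3))
    (fun r => famDeg G r * famDeg G (m - r))
    ⟨m / 3 + 1, mem_Icc.2 ⟨le_rfl, (Nat.le_div_iff_mul_le three_pos).2 (by omega)⟩⟩
  obtain ⟨hr₁, hr₂⟩ := mem_Icc.1 hr
  let F : Fin s → Finset (Finset V) := fun i =>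
    {g ∈ G | ∃ b ∈ B i, ∃ c ∈ C i, b ∪ c = g ∧ m < 3 * b.card ∧ 3 * b.card ≤ 2 * m}
  have hGF : G ⊆ univ.biUnion F := fun g hg =>
    have ⟨i, hi⟩ := hcover g hg
    mem_biUnion.2 ⟨i, mem_univ i, mem_filter.2 ⟨hg, hi⟩⟩
  have hF : ∀ i, #(F i) ≤ famDeg G r * famDeg G (m - r) := by
    intro i
    obtain h | ⟨g₀, hg₀⟩ := (F i).eq_empty_or_nonempty
    · simp [h]
    obtain ⟨-, b₀, hb₀, -, -, -, hlt, hle⟩ := mem_filter.1 hg₀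
    refine (card_le_famDeg_mul_famDeg hG (filter_subset _ _) b₀ fun g hg => ?_).trans
      (hmax _ (mem_Icc.2 ⟨by omega, by omega⟩))
    obtain ⟨-, b, -, c, hc, rfl, -⟩ := mem_filter.1 hg
    exact ⟨c, subset_union_right, union_mem_of_famJoin_subset hH (hsub i) hb₀ hc hlt⟩
  refine ⟨r, by omega, by omega, ?_⟩
  calc #G ≤ ∑ i, #(F i) := (card_le_card hGF).trans card_biUnion_le
    _ ≤ ∑ _i : Fin s, famDeg G r * famDeg G (m - r) := sum_le_sum fun i _ => hF i
    _ = s * (famDeg G r * famDeg G (m - r)) := by simp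
end

section
/- Fix m ≥ 1 and let V = (Fin m × Fin m) ⊕ (Fin m × Fin m) ⊕ (Fin m × Fin m), three disjoint copies of the index set Fin m × Fin m (representing the variables x_{ik}, y_{kj}, z_{ij}). For i, j, k ∈ Fin m, let the triangle T(i,j,k) ⊆ V be the three-element set consisting of (i,k) in the first copy, (k,j) in the second copy, and (i,j) in the third copy, and let T be the family of all such triangles T(i,j,k). If B and C are finite families of subsets of V with B ∨ C ⊆ T, then |Min(B)| ≤ 1 or |Min(C)| ≤ 1. -/
/-- `Min(F)`: the members of `F` that are minimal with respect to inclusion. -/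
def minFam {V : Type*} [DecidableEq V] (F : Finset (Finset V)) : Finset (Finset V) :=
  F.filter fun s => ∀ t ∈ F, t ⊆ s → t = s

/-- The triangle `T(i,j,k)`: the set `{x_{ik}, y_{kj}, z_{ij}}` of its three edges,
inside the disjoint union of the three copies of `Fin m × Fin m`. -/
def triangle {m : ℕ} (i j k : Fin m) :
    Finset ((Fin m × Fin m) ⊕ ((Fin m × Fin m) ⊕ (Fin m × Fin m))) :=
  {Sum.inl (i, k), Sum.inr (Sum.inl (k, j)), Sum.inr (Sum.inr (i, j))}

/-- The family of all triangles. -/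
def triangleFam (m : ℕ) :
    Finset (Finset ((Fin m × Fin m) ⊕ ((Fin m × Fin m) ⊕ (Fin m × Fin m)))) :=
  (Finset.univ : Finset (Fin m × Fin m × Fin m)).image fun p =>
    triangle p.1 p.2.1 p.2.2

lemma tri_card {m : ℕ}
    {s : Finset ((Fin m × Fin m) ⊕ ((Fin m × Fin m) ⊕ (Fin m × Fin m)))}
    (hs : s ∈ triangleFam m) : s.card = 3 := by
  obtain ⟨⟨i, j, k⟩, -, rfl⟩ := Finset.mem_image.1 hs
  rw [triangle, Finset.card_insert_of_notMem (by simp),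
    Finset.card_insert_of_notMem (by simp), Finset.card_singleton]

lemma tri_eq {m : ℕ}
    {s t : Finset ((Fin m × Fin m) ⊕ ((Fin m × Fin m) ⊕ (Fin m × Fin m)))}
    (hs : s ∈ triangleFam m) (ht : t ∈ triangleFam m)
    {u v : (Fin m × Fin m) ⊕ ((Fin m × Fin m) ⊕ (Fin m × Fin m))}
    (hus : u ∈ s) (hut : u ∈ t) (hvs : v ∈ s) (hvt : v ∈ t) (huv : u ≠ v) : s = t := by
  obtain ⟨⟨i, j, k⟩, -, rfl⟩ := Finset.mem_image.1 hs
  obtain ⟨⟨i', j', k'⟩, -, rfl⟩ := Finset.mem_image.1 ht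
  simp only [triangle, Finset.mem_insert, Finset.mem_singleton] at hus hut hvs hvt
  rcases hus with h|h|h <;> rcases hut with h'|h'|h' <;> rcases hvs with g|g|g <;>
    rcases hvt with g'|g'|g' <;> simp_all [triangle, Prod.ext_iff]

open Finset in
lemma case1 {V : Type*} [DecidableEq V] {T : Finset (Finset V)}
    (hcard : ∀ s ∈ T, s.card = 3)
    (hint : ∀ s ∈ T, ∀ t ∈ T, ∀ u v : V, u ∈ s → u ∈ t → v ∈ s → v ∈ t → u ≠ v → s = t)
    {b b' c c' : Finset V}
    (h11 : b ∪ c ∈ T) (h12 : b ∪ c' ∈ T) (h21 : b' ∪ c ∈ T) (h22 : b' ∪ c' ∈ T)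
    (hbb' : ¬ b ⊆ b') (hb'b : ¬ b' ⊆ b) (hcc' : ¬ c ⊆ c') (hc'c : ¬ c' ⊆ c)
    (heq : b ∪ c = b ∪ c') : False := by
  obtain ⟨u, huc, huc'⟩ := Finset.not_subset.1 hcc'
  obtain ⟨v, hvc', hvc⟩ := Finset.not_subset.1 hc'c
  have hub : u ∈ b := by
    have h : u ∈ b ∪ c' := heq ▸ Finset.mem_union_right b huc
    rcases Finset.mem_union.1 h with h | h
    · exact h
    · exact absurd h huc'
  have hvb : v ∈ b := by
    have h : v ∈ b ∪ c := heq.symm ▸ Finset.mem_union_right b hvc'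
    rcases Finset.mem_union.1 h with h | h
    · exact h
    · exact absurd h hvc
  have huv : u ≠ v := fun h => hvc (h ▸ huc)
  by_cases hT : b' ∪ c = b' ∪ c'
  · have hE : b' ∪ c = b ∪ c := by
      refine hint _ h21 _ h11 u v (Finset.mem_union_right _ huc)
        (Finset.mem_union_right _ huc) ?_ (Finset.mem_union_left _ hvb) huv
      exact hT ▸ Finset.mem_union_right b' hvc'
    have hE2 : b' ∪ c' = b ∪ c := hT.symm.trans hE
    obtain ⟨p, hpb, hpb'⟩ := Finset.not_subset.1 hbb'
    obtain ⟨q, hqb', hqb⟩ := Finset.not_subset.1 hb'b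
    have hpc : p ∈ c := by
      have h : p ∈ b' ∪ c := hE.symm ▸ Finset.mem_union_left c hpb
      rcases Finset.mem_union.1 h with h | h
      · exact absurd h hpb'
      · exact h
    have hpc' : p ∈ c' := by
      have h : p ∈ b' ∪ c' := hE2.symm ▸ Finset.mem_union_left c hpb
      rcases Finset.mem_union.1 h with h | h
      · exact absurd h hpb'
      · exact h
    have hqc : q ∈ c := by
      have h : q ∈ b ∪ c := hE ▸ Finset.mem_union_left c hqb'
      rcases Finset.mem_union.1 h with h | h
      · exact absurd h hqb
      · exact h
    have hqc' : q ∈ c' := by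
      have h : q ∈ b ∪ c' := by
        rw [← heq, ← hE]; exact Finset.mem_union_left c hqb'
      rcases Finset.mem_union.1 h with h | h
      · exact absurd h hqb
      · exact h
    have hup : u ≠ p := fun h => huc' (h ▸ hpc')
    have huq : u ≠ q := fun h => huc' (h ▸ hqc')
    have hvp : v ≠ p := fun h => hvc (h ▸ hpc)
    have hvq : v ≠ q := fun h => hvc (h ▸ hqc)
    have hpq : p ≠ q := fun h => hpb' (h ▸ hqb')
    have hsub : ({u, v, p, q} : Finset V) ⊆ b ∪ c := by
      intro x hx
      simp only [Finset.mem_insert, Finset.mem_singleton] at hx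
      rcases hx with rfl | rfl | rfl | rfl
      · exact Finset.mem_union_left c hub
      · exact Finset.mem_union_left c hvb
      · exact Finset.mem_union_left c hpb
      · exact Finset.mem_union_right b hqc
    have h4 : ({u, v, p, q} : Finset V).card = 4 := by
      rw [Finset.card_insert_of_notMem (by simp [huv, hup, huq]),
        Finset.card_insert_of_notMem (by simp [hvp, hvq]),
        Finset.card_insert_of_notMem (by simp [hpq]), Finset.card_singleton]
    have := Finset.card_le_card hsub
    rw [h4, hcard _ h11] at this
    omega
  · obtain ⟨β, hβb', hβb⟩ := Finset.not_subset.1 hb'b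
    have hsing : ∀ x ∈ b', x = β := by
      intro x hx
      by_contra h
      exact hT (hint _ h21 _ h22 x β (Finset.mem_union_left _ hx)
        (Finset.mem_union_left _ hx) (Finset.mem_union_left _ hβb')
        (Finset.mem_union_left _ hβb') h)
    have hinterβ : ∀ w ∈ c ∩ c', w = β := by
      intro w hw
      by_contra h
      exact hT (hint _ h21 _ h22 w β
        (Finset.mem_union_right _ (Finset.mem_inter.1 hw).1)
        (Finset.mem_union_right _ (Finset.mem_inter.1 hw).2)
        (Finset.mem_union_left _ hβb') (Finset.mem_union_left _ hβb') h)
    have hc2 : 2 ≤ c.card := by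
      have hsub1 : b' ∪ c ⊆ insert β c := by
        intro x hx
        rcases Finset.mem_union.1 hx with h | h
        · exact (hsing x h) ▸ Finset.mem_insert_self β c
        · exact Finset.mem_insert_of_mem h
      have h1 := Finset.card_le_card hsub1
      have h2 := Finset.card_insert_le β c
      rw [hcard _ h21] at h1
      omega
    have hc'2 : 2 ≤ c'.card := by
      have hsub1 : b' ∪ c' ⊆ insert β c' := by
        intro x hx
        rcases Finset.mem_union.1 hx with h | h
        · exact (hsing x h) ▸ Finset.mem_insert_self β c'
        · exact Finset.mem_insert_of_mem h
      have h1 := Finset.card_le_card hsub1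
      have h2 := Finset.card_insert_le β c'
      rw [hcard _ h22] at h1
      omega
    have hint1 : (c ∩ c').card ≤ 1 :=
      Finset.card_le_one.2 fun a ha b hb => (hinterβ a ha).trans (hinterβ b hb).symm
    have hcup : c ∪ c' ⊆ b ∪ c := by
      intro x hx
      rcases Finset.mem_union.1 hx with h | h
      · exact Finset.mem_union_right b h
      · exact heq ▸ Finset.mem_union_right b h
    have hcupcard := Finset.card_le_card hcup
    rw [hcard _ h11] at hcupcard
    have hsum := Finset.card_union_add_card_inter c c'
    have hne : (c ∩ c').Nonempty := Finset.card_pos.1 (by omega)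
    obtain ⟨w, hw⟩ := hne
    have hwβ := hinterβ w hw
    subst hwβ
    have hβc : w ∈ c := (Finset.mem_inter.1 hw).1
    have hβc' : w ∈ c' := (Finset.mem_inter.1 hw).2
    have e1 : b' ∪ c = b ∪ c := by
      apply Finset.eq_of_subset_of_card_le
      · intro x hx
        rcases Finset.mem_union.1 hx with h | h
        · exact Finset.mem_union_right b ((hsing x h) ▸ hβc)
        · exact Finset.mem_union_right b h
      · rw [hcard _ h11, hcard _ h21]
    have e2 : b' ∪ c' = b ∪ c := by
      apply Finset.eq_of_subset_of_card_le
      · intro x hx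
        rcases Finset.mem_union.1 hx with h | h
        · exact Finset.mem_union_right b ((hsing x h) ▸ hβc)
        · exact heq ▸ Finset.mem_union_right b h
      · rw [hcard _ h11, hcard _ h22]
    exact hT (e1.trans e2.symm)

theorem stmt_10 {m : ℕ} (hm : 1 ≤ m)
    (B C : Finset (Finset ((Fin m × Fin m) ⊕ ((Fin m × Fin m) ⊕ (Fin m × Fin m)))))
    (hsub : famJoin B C ⊆ triangleFam m) :
    (minFam B).card ≤ 1 ∨ (minFam C).card ≤ 1 := by
  by_cases hB : (minFam B).card ≤ 1
  · exact Or.inl hB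
  right
  by_contra hC
  obtain ⟨b, hb, b', hb', hbne⟩ := Finset.one_lt_card.1 (not_le.1 hB)
  obtain ⟨c, hc, c', hc', hcne⟩ := Finset.one_lt_card.1 (not_le.1 hC)
  rw [minFam, Finset.mem_filter] at hb hb' hc hc'
  obtain ⟨hbB, hbmin⟩ := hb
  obtain ⟨hb'B, hb'min⟩ := hb'
  obtain ⟨hcC, hcmin⟩ := hc
  obtain ⟨hc'C, hc'min⟩ := hc'
  have hbb' : ¬ b ⊆ b' := fun h => hbne (hb'min b hbB h)
  have hb'b : ¬ b' ⊆ b := fun h => hbne (hbmin b' hb'B h).symm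
  have hcc' : ¬ c ⊆ c' := fun h => hcne (hc'min c hcC h)
  have hc'c : ¬ c' ⊆ c := fun h => hcne (hcmin c' hc'C h).symm
  have mk : ∀ x ∈ B, ∀ y ∈ C, x ∪ y ∈ triangleFam m := fun x hx y hy =>
    hsub (Finset.mem_image.2 ⟨(x, y), Finset.mem_product.2 ⟨hx, hy⟩, rfl⟩)
  have h11 := mk b hbB c hcC
  have h12 := mk b hbB c' hc'C
  have h21 := mk b' hb'B c hcC
  have h22 := mk b' hb'B c' hc'C
  have hcard : ∀ s ∈ triangleFam m, s.card = 3 := fun s hs => tri_card hs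
  have hint : ∀ s ∈ triangleFam m, ∀ t ∈ triangleFam m,
      ∀ u v : (Fin m × Fin m) ⊕ ((Fin m × Fin m) ⊕ (Fin m × Fin m)),
      u ∈ s → u ∈ t → v ∈ s → v ∈ t → u ≠ v → s = t :=
    fun s hs t ht u v h1 h2 h3 h4 h5 => tri_eq hs ht h1 h2 h3 h4 h5
  by_cases e1 : b ∪ c = b ∪ c'
  · exact case1 hcard hint h11 h12 h21 h22 hbb' hb'b hcc' hc'c e1
  by_cases e2 : b ∪ c = b' ∪ c
  · have h11' : c ∪ b ∈ triangleFam m := by rw [Finset.union_comm]; exact h11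
    have h12' : c ∪ b' ∈ triangleFam m := by rw [Finset.union_comm]; exact h21
    have h21' : c' ∪ b ∈ triangleFam m := by rw [Finset.union_comm]; exact h12
    have h22' : c' ∪ b' ∈ triangleFam m := by rw [Finset.union_comm]; exact h22
    have e2' : c ∪ b = c ∪ b' := by
      rw [Finset.union_comm c b, Finset.union_comm c b']; exact e2
    exact case1 hcard hint h11' h12' h21' h22' hcc' hc'c hbb' hb'b e2'
  · have cb : b.card ≤ 1 := Finset.card_le_one.2 fun x hx y hy => by
      by_contra h
      exact e1 (hint _ h11 _ h12 x y (Finset.mem_union_left _ hx)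
        (Finset.mem_union_left _ hx) (Finset.mem_union_left _ hy)
        (Finset.mem_union_left _ hy) h)
    have cc : c.card ≤ 1 := Finset.card_le_one.2 fun x hx y hy => by
      by_contra h
      exact e2 (hint _ h11 _ h21 x y (Finset.mem_union_right _ hx)
        (Finset.mem_union_right _ hx) (Finset.mem_union_right _ hy)
        (Finset.mem_union_right _ hy) h)
    have hle := Finset.card_union_le b c
    have h3 := hcard _ h11
    omega
end

section
/- Let E ⊆ Fin n × Fin n be the edge set of a bipartite graph with left vertex set Fin n and right vertex set Fin n, and suppose E contains no copy of K_{2,2}: there are no u₁ ≠ u₂ and v₁ ≠ v₂ with (u₁,v₁), (u₁,v₂), (u₂,v₁), (u₂,v₂) all in E. Let V = Fin n ⊕ Fin n and let A be the family of two-element sets {inl u, inr v} over all pairs (u, v) ∈ E. If B and C are finite families of subsets of V with B ∨ C ⊆ A, then |Min(B)| ≤ 1 or |Min(C)| ≤ 1. -/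
section aux

variable {α β : Type*} [DecidableEq α] [DecidableEq β]

lemma eq_of_union_inl {b c : Finset (α ⊕ β)} {u : α} {v : β}
    (h : b ∪ c = {Sum.inl u, Sum.inr v}) {x : α} (hx : Sum.inl x ∈ b ∪ c) : x = u := by
  rw [h] at hx
  simp only [Finset.mem_insert, Finset.mem_singleton] at hx
  rcases hx with hx | hx
  · exact Sum.inl.inj hx
  · exact absurd hx (by simp)

lemma eq_of_union_inr {b c : Finset (α ⊕ β)} {u : α} {v : β}
    (h : b ∪ c = {Sum.inl u, Sum.inr v}) {x : β} (hx : Sum.inr x ∈ b ∪ c) : x = v := by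
  rw [h] at hx
  simp only [Finset.mem_insert, Finset.mem_singleton] at hx
  rcases hx with hx | hx
  · exact absurd hx (by simp)
  · exact Sum.inr.inj hx

lemma aux_main (S : α → β → Prop) {b₁ b₂ c₁ c₂ : Finset (α ⊕ β)}
    {u11 u12 u21 u22 : α} {v11 v12 v21 v22 : β}
    (h11 : b₁ ∪ c₁ = {Sum.inl u11, Sum.inr v11})
    (h12 : b₁ ∪ c₂ = {Sum.inl u12, Sum.inr v12})
    (h21 : b₂ ∪ c₁ = {Sum.inl u21, Sum.inr v21})
    (h22 : b₂ ∪ c₂ = {Sum.inl u22, Sum.inr v22})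
    (hS11 : S u11 v11) (hS12 : S u12 v12) (hS21 : S u21 v21) (hS22 : S u22 v22)
    (hc : c₁ ≠ c₂) (hc1 : c₁.Nonempty) (hc2 : c₂.Nonempty)
    {x y : α} (hx : Sum.inl x ∈ b₁) (hy : Sum.inl y ∈ b₂) (hxy : x ≠ y) :
    ∃ p₁ p₂ q₁ q₂, p₁ ≠ p₂ ∧ q₁ ≠ q₂ ∧ S p₁ q₁ ∧ S p₁ q₂ ∧ S p₂ q₁ ∧ S p₂ q₂ := by
  have hxu11 : x = u11 := eq_of_union_inl h11 (Finset.mem_union_left _ hx)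
  have hxu12 : x = u12 := eq_of_union_inl h12 (Finset.mem_union_left _ hx)
  have hyu21 : y = u21 := eq_of_union_inl h21 (Finset.mem_union_left _ hy)
  have hyu22 : y = u22 := eq_of_union_inl h22 (Finset.mem_union_left _ hy)
  have hc1nl : ∀ z : α, Sum.inl z ∉ c₁ := by
    intro z hz
    have h1 : z = u11 := eq_of_union_inl h11 (Finset.mem_union_right _ hz)
    have h2 : z = u21 := eq_of_union_inl h21 (Finset.mem_union_right _ hz)
    exact hxy (by rw [hxu11, hyu21, ← h1, ← h2])
  have hc2nl : ∀ z : α, Sum.inl z ∉ c₂ := by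
    intro z hz
    have h1 : z = u12 := eq_of_union_inl h12 (Finset.mem_union_right _ hz)
    have h2 : z = u22 := eq_of_union_inl h22 (Finset.mem_union_right _ hz)
    exact hxy (by rw [hxu12, hyu22, ← h1, ← h2])
  obtain ⟨e₁, he₁⟩ := hc1
  obtain ⟨e₂, he₂⟩ := hc2
  cases e₁ with
  | inl z => exact absurd he₁ (hc1nl z)
  | inr w₁ =>
  cases e₂ with
  | inl z => exact absurd he₂ (hc2nl z)
  | inr w₂ =>
  have hw1a : w₁ = v11 := eq_of_union_inr h11 (Finset.mem_union_right _ he₁)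
  have hw1b : w₁ = v21 := eq_of_union_inr h21 (Finset.mem_union_right _ he₁)
  have hw2a : w₂ = v12 := eq_of_union_inr h12 (Finset.mem_union_right _ he₂)
  have hw2b : w₂ = v22 := eq_of_union_inr h22 (Finset.mem_union_right _ he₂)
  have hww : w₁ ≠ w₂ := by
    intro hw
    apply hc
    ext e
    cases e with
    | inl z => simp [hc1nl z, hc2nl z]
    | inr z =>
      constructor
      · intro hz
        have : z = v11 := eq_of_union_inr h11 (Finset.mem_union_right _ hz)
        rw [this, ← hw1a, hw, hw2a, ← hw2a]
        exact he₂
      · intro hz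
        have : z = v12 := eq_of_union_inr h12 (Finset.mem_union_right _ hz)
        rw [this, ← hw2a, ← hw, hw1a, ← hw1a]
        exact he₁
  refine ⟨x, y, w₁, w₂, hxy, hww, ?_, ?_, ?_, ?_⟩
  · rw [hxu11, hw1a]; exact hS11
  · rw [hxu12, hw2a]; exact hS12
  · rw [hyu21, hw1b]; exact hS21
  · rw [hyu22, hw2b]; exact hS22

lemma aux_core {b₁ b₂ c₁ c₂ : Finset (α ⊕ β)}
    {u11 u12 u21 u22 : α} {v11 v12 v21 v22 : β}
    (h11 : b₁ ∪ c₁ = {Sum.inl u11, Sum.inr v11})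
    (h12 : b₁ ∪ c₂ = {Sum.inl u12, Sum.inr v12})
    (h21 : b₂ ∪ c₁ = {Sum.inl u21, Sum.inr v21})
    (h22 : b₂ ∪ c₂ = {Sum.inl u22, Sum.inr v22})
    (hb1 : ∀ z : β, Sum.inr z ∉ b₁) (hb2 : ∀ z : α, Sum.inl z ∉ b₂)
    (hIc : ∀ z w : α, Sum.inl z ∈ c₁ → Sum.inl w ∈ c₂ → z = w)
    (hRc : ∀ z w : β, Sum.inr z ∈ c₁ → Sum.inr w ∈ c₂ → z = w) : c₁ = c₂ := by
  have hu1 : Sum.inl u21 ∈ c₁ := by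
    have hm : Sum.inl u21 ∈ b₂ ∪ c₁ := by rw [h21]; simp
    rcases Finset.mem_union.mp hm with h | h
    · exact absurd h (hb2 _)
    · exact h
  have hu2 : Sum.inl u22 ∈ c₂ := by
    have hm : Sum.inl u22 ∈ b₂ ∪ c₂ := by rw [h22]; simp
    rcases Finset.mem_union.mp hm with h | h
    · exact absurd h (hb2 _)
    · exact h
  have hv1 : Sum.inr v11 ∈ c₁ := by
    have hm : Sum.inr v11 ∈ b₁ ∪ c₁ := by rw [h11]; simp
    rcases Finset.mem_union.mp hm with h | h
    · exact absurd h (hb1 _)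
    · exact h
  have hv2 : Sum.inr v12 ∈ c₂ := by
    have hm : Sum.inr v12 ∈ b₁ ∪ c₂ := by rw [h12]; simp
    rcases Finset.mem_union.mp hm with h | h
    · exact absurd h (hb1 _)
    · exact h
  have huu : u21 = u22 := hIc _ _ hu1 hu2
  have hvv : v11 = v12 := hRc _ _ hv1 hv2
  ext e
  cases e with
  | inl z =>
    constructor
    · intro hz
      have : z = u21 := eq_of_union_inl h21 (Finset.mem_union_right _ hz)
      rw [this, huu]; exact hu2
    · intro hz
      have : z = u22 := eq_of_union_inl h22 (Finset.mem_union_right _ hz)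
      rw [this, ← huu]; exact hu1
  | inr z =>
    constructor
    · intro hz
      have : z = v11 := eq_of_union_inr h11 (Finset.mem_union_right _ hz)
      rw [this, hvv]; exact hv2
    · intro hz
      have : z = v12 := eq_of_union_inr h12 (Finset.mem_union_right _ hz)
      rw [this, ← hvv]; exact hv1

lemma aux_four {b₁ b₂ c₁ c₂ : Finset (α ⊕ β)}
    {u11 u12 u21 u22 : α} {v11 v12 v21 v22 : β}
    (h11 : b₁ ∪ c₁ = {Sum.inl u11, Sum.inr v11})
    (h12 : b₁ ∪ c₂ = {Sum.inl u12, Sum.inr v12})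
    (h21 : b₂ ∪ c₁ = {Sum.inl u21, Sum.inr v21})
    (h22 : b₂ ∪ c₂ = {Sum.inl u22, Sum.inr v22})
    (hnb12 : ¬ b₁ ⊆ b₂) (hnb21 : ¬ b₂ ⊆ b₁) (hcne : c₁ ≠ c₂)
    (hIb : ∀ z w : α, Sum.inl z ∈ b₁ → Sum.inl w ∈ b₂ → z = w)
    (hRb : ∀ z w : β, Sum.inr z ∈ b₁ → Sum.inr w ∈ b₂ → z = w)
    (hIc : ∀ z w : α, Sum.inl z ∈ c₁ → Sum.inl w ∈ c₂ → z = w)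
    (hRc : ∀ z w : β, Sum.inr z ∈ c₁ → Sum.inr w ∈ c₂ → z = w) : False := by
  obtain ⟨e, he1, he2⟩ := Finset.not_subset.mp hnb12
  obtain ⟨e', hf1, hf2⟩ := Finset.not_subset.mp hnb21
  cases e with
  | inl x =>
    have hb2nl : ∀ z : α, Sum.inl z ∉ b₂ := by
      intro z hz
      exact he2 (by rwa [← hIb x z he1 hz] at hz)
    cases e' with
    | inl z => exact hb2nl z hf1
    | inr r =>
      have hb1nr : ∀ z : β, Sum.inr z ∉ b₁ := by
        intro z hz
        exact hf2 (by rwa [hRb z r hz hf1] at hz)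
      exact hcne (aux_core h11 h12 h21 h22 hb1nr hb2nl hIc hRc)
  | inr r =>
    have hb2nr : ∀ z : β, Sum.inr z ∉ b₂ := by
      intro z hz
      exact he2 (by rwa [← hRb r z he1 hz] at hz)
    cases e' with
    | inr z => exact hb2nr z hf1
    | inl y =>
      have hb1nl : ∀ z : α, Sum.inl z ∉ b₁ := by
        intro z hz
        exact hf2 (by rwa [hIb z y hz hf1] at hz)
      exact hcne (aux_core h21 h22 h11 h12 hb2nr hb1nl hIc hRc)

end aux

theorem stmt_11 {n : ℕ} (E : Finset (Fin n × Fin n))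
    (hK22 : ¬ ∃ u₁ u₂ v₁ v₂ : Fin n, u₁ ≠ u₂ ∧ v₁ ≠ v₂ ∧
      (u₁, v₁) ∈ E ∧ (u₁, v₂) ∈ E ∧ (u₂, v₁) ∈ E ∧ (u₂, v₂) ∈ E)
    (B C : Finset (Finset (Fin n ⊕ Fin n)))
    (hsub : famJoin B C ⊆
      E.image fun p => ({Sum.inl p.1, Sum.inr p.2} : Finset (Fin n ⊕ Fin n))) :
    (minFam B).card ≤ 1 ∨ (minFam C).card ≤ 1 := by
  rw [or_iff_not_imp_left]
  intro hB
  by_contra hC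
  have hB2 : 1 < (minFam B).card := lt_of_not_ge hB
  have hC2 : 1 < (minFam C).card := lt_of_not_ge hC
  obtain ⟨b₁, hb₁, b₂, hb₂, hbne⟩ := Finset.one_lt_card.mp hB2
  obtain ⟨c₁, hc₁, c₂, hc₂, hcne⟩ := Finset.one_lt_card.mp hC2
  simp only [minFam, Finset.mem_filter] at hb₁ hb₂ hc₁ hc₂
  obtain ⟨hb₁B, hb₁m⟩ := hb₁
  obtain ⟨hb₂B, hb₂m⟩ := hb₂
  obtain ⟨hc₁C, hc₁m⟩ := hc₁
  obtain ⟨hc₂C, hc₂m⟩ := hc₂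
  have hnb12 : ¬ b₁ ⊆ b₂ := fun h => hbne (hb₂m b₁ hb₁B h)
  have hnb21 : ¬ b₂ ⊆ b₁ := fun h => hbne ((hb₁m b₂ hb₂B h).symm)
  have hnc12 : ¬ c₁ ⊆ c₂ := fun h => hcne (hc₂m c₁ hc₁C h)
  have hnc21 : ¬ c₂ ⊆ c₁ := fun h => hcne ((hc₁m c₂ hc₂C h).symm)
  have key : ∀ b ∈ B, ∀ c ∈ C, ∃ u v, (u, v) ∈ E ∧
      b ∪ c = {Sum.inl u, Sum.inr v} := by
    intro b hb c hc
    have hmem : b ∪ c ∈ famJoin B C :=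
      Finset.mem_image.mpr ⟨(b, c), Finset.mem_product.mpr ⟨hb, hc⟩, rfl⟩
    obtain ⟨p, hp, hpe⟩ := Finset.mem_image.mp (hsub hmem)
    exact ⟨p.1, p.2, hp, hpe.symm⟩
  obtain ⟨u11, v11, hE11, h11⟩ := key b₁ hb₁B c₁ hc₁C
  obtain ⟨u12, v12, hE12, h12⟩ := key b₁ hb₁B c₂ hc₂C
  obtain ⟨u21, v21, hE21, h21⟩ := key b₂ hb₂B c₁ hc₁C
  obtain ⟨u22, v22, hE22, h22⟩ := key b₂ hb₂B c₂ hc₂C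
  have hb1ne : b₁.Nonempty := by
    rcases Finset.eq_empty_or_nonempty b₁ with h | h
    · exact absurd (by simp [h]) hnb12
    · exact h
  have hb2ne : b₂.Nonempty := by
    rcases Finset.eq_empty_or_nonempty b₂ with h | h
    · exact absurd (by simp [h]) hnb21
    · exact h
  have hc1ne : c₁.Nonempty := by
    rcases Finset.eq_empty_or_nonempty c₁ with h | h
    · exact absurd (by simp [h]) hnc12
    · exact h
  have hc2ne : c₂.Nonempty := by
    rcases Finset.eq_empty_or_nonempty c₂ with h | h
    · exact absurd (by simp [h]) hnc21
    · exact h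
  -- the swap embedding
  set f : (Fin n ⊕ Fin n) ↪ (Fin n ⊕ Fin n) := (Equiv.sumComm (Fin n) (Fin n)).toEmbedding with hf
  have hmap : ∀ (s t : Finset (Fin n ⊕ Fin n)) (u v : Fin n),
      s ∪ t = {Sum.inl u, Sum.inr v} → s.map f ∪ t.map f = {Sum.inl v, Sum.inr u} := by
    intro s t u v h
    rw [← Finset.map_union, h]
    rw [Finset.map_insert, Finset.map_singleton, Finset.pair_comm]
    rfl
  have hmapmemr : ∀ (s : Finset (Fin n ⊕ Fin n)) (x : Fin n),
      Sum.inr x ∈ s → Sum.inl x ∈ s.map f := by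
    intro s x hx
    have := Finset.mem_map_of_mem f hx
    simpa [hf] using this
  have hmapne : ∀ (s t : Finset (Fin n ⊕ Fin n)), s ≠ t → s.map f ≠ t.map f := by
    intro s t h hh
    exact h (Finset.map_injective f hh)
  have e11 : c₁ ∪ b₁ = {Sum.inl u11, Sum.inr v11} := by rw [Finset.union_comm]; exact h11
  have e12 : c₂ ∪ b₁ = {Sum.inl u12, Sum.inr v12} := by rw [Finset.union_comm]; exact h12
  have e21 : c₁ ∪ b₂ = {Sum.inl u21, Sum.inr v21} := by rw [Finset.union_comm]; exact h21
  have e22 : c₂ ∪ b₂ = {Sum.inl u22, Sum.inr v22} := by rw [Finset.union_comm]; exact h22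
  by_cases hI : ∃ x y : Fin n, Sum.inl x ∈ b₁ ∧ Sum.inl y ∈ b₂ ∧ x ≠ y
  · obtain ⟨x, y, hx, hy, hxy⟩ := hI
    obtain ⟨p₁, p₂, q₁, q₂, hp, hq, hs1, hs2, hs3, hs4⟩ :=
      aux_main (fun u v => (u, v) ∈ E) h11 h12 h21 h22 hE11 hE12 hE21 hE22
        hcne hc1ne hc2ne hx hy hxy
    exact hK22 ⟨p₁, p₂, q₁, q₂, hp, hq, hs1, hs2, hs3, hs4⟩
  by_cases hII : ∃ x y : Fin n, Sum.inr x ∈ b₁ ∧ Sum.inr y ∈ b₂ ∧ x ≠ y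
  · obtain ⟨x, y, hx, hy, hxy⟩ := hII
    obtain ⟨p₁, p₂, q₁, q₂, hp, hq, hs1, hs2, hs3, hs4⟩ :=
      aux_main (fun v u => (u, v) ∈ E)
        (hmap _ _ _ _ h11) (hmap _ _ _ _ h12) (hmap _ _ _ _ h21) (hmap _ _ _ _ h22)
        hE11 hE12 hE21 hE22
        (hmapne _ _ hcne) (Finset.map_nonempty.mpr hc1ne)
        (Finset.map_nonempty.mpr hc2ne)
        (hmapmemr _ _ hx) (hmapmemr _ _ hy) hxy
    exact hK22 ⟨q₁, q₂, p₁, p₂, hq, hp, hs1, hs3, hs2, hs4⟩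
  by_cases hIII : ∃ x y : Fin n, Sum.inl x ∈ c₁ ∧ Sum.inl y ∈ c₂ ∧ x ≠ y
  · obtain ⟨x, y, hx, hy, hxy⟩ := hIII
    obtain ⟨p₁, p₂, q₁, q₂, hp, hq, hs1, hs2, hs3, hs4⟩ :=
      aux_main (fun u v => (u, v) ∈ E) e11 e21 e12 e22 hE11 hE21 hE12 hE22
        hbne hb1ne hb2ne hx hy hxy
    exact hK22 ⟨p₁, p₂, q₁, q₂, hp, hq, hs1, hs2, hs3, hs4⟩
  by_cases hIV : ∃ x y : Fin n, Sum.inr x ∈ c₁ ∧ Sum.inr y ∈ c₂ ∧ x ≠ y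
  · obtain ⟨x, y, hx, hy, hxy⟩ := hIV
    obtain ⟨p₁, p₂, q₁, q₂, hp, hq, hs1, hs2, hs3, hs4⟩ :=
      aux_main (fun v u => (u, v) ∈ E)
        (hmap _ _ _ _ e11) (hmap _ _ _ _ e21) (hmap _ _ _ _ e12) (hmap _ _ _ _ e22)
        hE11 hE21 hE12 hE22
        (hmapne _ _ hbne) (Finset.map_nonempty.mpr hb1ne)
        (Finset.map_nonempty.mpr hb2ne)
        (hmapmemr _ _ hx) (hmapmemr _ _ hy) hxy
    exact hK22 ⟨q₁, q₂, p₁, p₂, hq, hp, hs1, hs3, hs2, hs4⟩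
  push_neg at hI hII hIII hIV
  exact aux_four h11 h12 h21 h22 hnb12 hnb21 hcne
    (fun z w hz hw => hI z w hz hw)
    (fun z w hz hw => hII z w hz hw)
    (fun z w hz hw => hIII z w hz hw)
    (fun z w hz hw => hIV z w hz hw)
end

section
/- Let f be a multivariate polynomial in n variables with coefficients in ℕ, and define its dual f* = ∏_{d ∈ support(f)} (∑_{i ∈ supp(d)} X_i), the product over all exponent vectors d of f with nonzero coefficient of the sum of the variables occurring in d. Then for every a : Fin n → ℕ with a i ≤ 1 for all i: f(a) = 0 if and only if f*(ā) ≠ 0, where ā is defined by ā i = 1 − a i. -/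
open MvPolynomial

theorem stmt_12 {n : ℕ} (f : MvPolynomial (Fin n) ℕ)
    (a : Fin n → ℕ) (ha : ∀ i, a i ≤ 1) :
    eval a f = 0 ↔
      eval (fun i => 1 - a i)
        (∏ d ∈ f.support, ∑ i ∈ d.support, (X i : MvPolynomial (Fin n) ℕ)) ≠ 0 := by
  simp only [map_prod, map_sum, eval_X, Finset.prod_ne_zero_iff]
  rw [MvPolynomial.eval_eq, Finset.sum_eq_zero_iff]
  constructor
  · intro h d hd
    have h1 : f.coeff d * ∏ i ∈ d.support, a i ^ d i = 0 := h d hd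
    have h2 : f.coeff d ≠ 0 := MvPolynomial.mem_support_iff.mp hd
    have h3 : ∏ i ∈ d.support, a i ^ d i = 0 := by
      rcases Nat.mul_eq_zero.mp h1 with h | h
      · exact absurd h h2
      · exact h
    obtain ⟨i, hi, hai⟩ := Finset.prod_eq_zero_iff.mp h3
    have hdi : d i ≠ 0 := Finsupp.mem_support_iff.mp hi
    have hai0 : a i = 0 := by
      rcases pow_eq_zero_iff hdi |>.mp hai with h
      exact h
    intro hs
    have := Finset.sum_eq_zero_iff.mp hs i hi
    omega
  · intro h d hd
    have hs := h d hd
    have : ∃ i ∈ d.support, 1 - a i ≠ 0 := by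
      by_contra hc
      push_neg at hc
      exact hs (Finset.sum_eq_zero fun i hi => hc i hi)
    obtain ⟨i, hi, hne⟩ := this
    have hai : a i = 0 := by have := ha i; omega
    have : ∏ j ∈ d.support, a j ^ d j = 0 := by
      apply Finset.prod_eq_zero hi
      have hdi : d i ≠ 0 := Finsupp.mem_support_iff.mp hi
      simp [hai, hdi]
    simp [this]
end

section
/- Let R be a commutative semiring and m ≥ 1. Work in the polynomial ring MvPolynomial (Fin m) S whose coefficient ring is S = MvPolynomial (Fin m × Fin m) R; write Y_j for the j-th variable of the outer ring and X_{(i,j)} for the variables of S. Consider the polynomial P = ∏_{i ∈ Fin m} ∑_{j ∈ Fin m} C(X_{(i,j)}) · Y_j, where C : S → MvPolynomial (Fin m) S is the constant embedding. Then the coefficient in P of the multilinear monomial Y_0 Y_1 ⋯ Y_{m−1} (the exponent vector assigning 1 to every j ∈ Fin m) equals the permanent ∑_{σ ∈ Perm(Fin m)} ∏_{i ∈ Fin m} X_{(i, σ i)} in S. -/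
open MvPolynomial

lemma aux_cond_iff {m : ℕ} (g : Fin m → Fin m) :
    (∑ i : Fin m, Finsupp.single (g i) 1) = (∑ j : Fin m, Finsupp.single j (1 : ℕ)) ↔
      Function.Bijective g := by
  constructor
  · intro h
    rw [← Finite.surjective_iff_bijective]
    intro j
    have hj := DFunLike.congr_fun h j
    simp only [Finset.sum_apply', Finsupp.single_apply] at hj
    by_contra hc
    push_neg at hc
    have h1 : (∑ i : Fin m, if g i = j then 1 else 0) = 0 := by
      apply Finset.sum_eq_zero
      intro i _
      simp [hc i]
    have h2 : (∑ i : Fin m, if i = j then 1 else 0) = 1 := by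
      simp [Finset.sum_ite_eq]
    simp only [h1, h2] at hj
    exact zero_ne_one hj
  · intro h
    exact Fintype.sum_bijective g h _ _ (fun i => rfl)

theorem stmt_14 {R : Type*} [CommSemiring R] (m : ℕ) (hm : 1 ≤ m) :
    coeff (∑ j : Fin m, Finsupp.single j 1)
        (∏ i : Fin m, ∑ j : Fin m,
          (C (X (i, j)) * X j :
            MvPolynomial (Fin m) (MvPolynomial (Fin m × Fin m) R))) =
      ∑ σ : Equiv.Perm (Fin m), ∏ i : Fin m, X (i, σ i) := by
  rw [Fintype.prod_sum]
  rw [coeff_sum]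
  have key : ∀ g : Fin m → Fin m,
      coeff (∑ j : Fin m, Finsupp.single j 1)
        (∏ i : Fin m, (C (X (i, g i)) * X (g i) :
          MvPolynomial (Fin m) (MvPolynomial (Fin m × Fin m) R))) =
      if (∑ i : Fin m, Finsupp.single (g i) 1) = (∑ j : Fin m, Finsupp.single j (1:ℕ))
        then ∏ i : Fin m, X (i, g i) else 0 := by
    intro g
    rw [Finset.prod_mul_distrib, ← map_prod]
    have : (∏ i : Fin m, (X (g i) :
        MvPolynomial (Fin m) (MvPolynomial (Fin m × Fin m) R))) =
        monomial (∑ i : Fin m, Finsupp.single (g i) 1) 1 := by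
      rw [monomial_sum_one]
      simp [X]
    rw [this, coeff_C_mul, coeff_monomial]
    split <;> simp
  simp_rw [key]
  rw [Finset.sum_ite, Finset.sum_const_zero, add_zero]
  apply Finset.sum_nbij' (fun g => if h : Function.Bijective g then Equiv.ofBijective g h
      else Equiv.refl _) (fun σ => ⇑σ)
  · intro g hg
    simp only [Finset.mem_filter, Finset.mem_univ, true_and] at hg
    simp
  · intro σ _
    simp only [Finset.mem_filter, Finset.mem_univ, true_and]
    rw [aux_cond_iff]
    exact σ.bijective
  · intro g hg
    simp only [Finset.mem_filter, Finset.mem_univ, true_and] at hg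
    rw [aux_cond_iff] at hg
    rw [dif_pos hg]
    rfl
  · intro σ _
    ext i
    rw [dif_pos σ.bijective]
    rfl
  · intro g hg
    simp only [Finset.mem_filter, Finset.mem_univ, true_and] at hg
    rw [aux_cond_iff] at hg
    rw [dif_pos hg]
    rfl
end
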